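/- Let f : ℝⁿ → ℝ be convex and differentiable with componentwise Lipschitz constants L₁,…,Lₙ > 0, let ψ(x) = ∑_{i=1}^n ψᵢ(xᵢ) with each ψᵢ : ℝ → ℝ convex, and set F = f + ψ with nonempty minimizer set Ω and F* = min F. Fix L̄ᵢ ≥ Lᵢ, let p₁,…,pₙ be probabilities with pᵢ ≥ p_min > 0 and ∑pᵢ = 1, let indices i₀, i₁, … be drawn i.i.d. from this distribution, and define the proximal coordinate descent iterates x_{k+1} = x_k + d^k_{i_k} e_{i_k}, where d^k_i is the minimizer over d ∈ ℝ of ∇ᵢ f(x_k)·d + (L̄ᵢ/2)d² + ψᵢ((x_k)ᵢ + d). Then k·(E[F(x_k)] − F*) → 0, where E is the expectation over the random indices; moreover, for any minimizer x̄ of F, the sequence E[∑_{i=1}^n (L̄ᵢ/pᵢ)((x_k)ᵢ − x̄ᵢ)²] is bounded. -/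

import Mathlib

/-!
With `r²(x) = ∑ᵢ (L̄ᵢ/pᵢ)(xᵢ - x̄ᵢ)²`, the function `V = r² + (2/p_min)(F - F*)` is a Lyapunov
function: one step satisfies `E[V(x⁺)] + 2(F(x) - F*) ≤ V(x)`. The coordinate descent lemma gives
`F(x + dᵢeᵢ) ≤ F(x) + Δᵢ` with model decrease `Δᵢ ≤ 0`, hence `E[F(x⁺)] ≤ F(x) + p_min ∑ᵢ Δᵢ`;
optimality of the proximal step together with convexity of `f` gives
`E[r²(x⁺)] ≤ r²(x) + 2(F* - F(x)) - 2 ∑ᵢ Δᵢ`. Telescoping bounds `E[r²(x_k)]` and the series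
`∑ₖ (E[F(x_k)] - F*)`, and a summable nonincreasing sequence is `o(1/k)`.
-/

/-- The random trajectory of a coordinate-type method: `traj step x0 k ι` is the
`k`-th iterate obtained from `x0` when the coordinates chosen at iterations
`0, …, k−1` are `ι 0, …, ι (k−1)`. -/
def traj {E : Type*} {n : ℕ} (step : E → Fin n → E) (x0 : E) :
    ∀ k : ℕ, (Fin k → Fin n) → E
  | 0, _ => x0
  | k + 1, ι => step (traj step x0 k fun t => ι t.castSucc) (ι (Fin.last k))

open Filter Topology Set Finset

theorem le_of_hasDerivAt_mul_self_nonpos {φ φ' : ℝ → ℝ} (hφ : ∀ t, HasDerivAt φ (φ' t) t)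
    (hsign : ∀ t, φ' t * t ≤ 0) (h : ℝ) : φ h ≤ φ 0 := by
  have hcont : Continuous φ := continuous_iff_continuousAt.2 fun t => (hφ t).continuousAt
  rcases lt_trichotomy h 0 with hneg | rfl | hpos
  · obtain ⟨c, hc, hslope⟩ := exists_hasDerivAt_eq_slope φ φ' hneg hcont.continuousOn
      fun t _ => hφ t
    have : 0 ≤ φ' c := nonneg_of_mul_nonpos_left (hsign c) hc.2
    rw [hslope, le_div_iff₀ (by linarith)] at this
    linarith
  · exact le_rfl
  · obtain ⟨c, hc, hslope⟩ := exists_hasDerivAt_eq_slope φ φ' hpos hcont.continuousOn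
      fun t _ => hφ t
    have : φ' c ≤ 0 := nonpos_of_mul_nonpos_left (hsign c) hc.1
    rw [hslope, div_le_iff₀ (by linarith)] at this
    linarith

theorem le_add_mul_add_sq_of_abs_deriv_sub_le {g g' : ℝ → ℝ} {L : ℝ}
    (hg : ∀ t, HasDerivAt g (g' t) t) (hlip : ∀ t, |g' t - g' 0| ≤ L * |t|) (h : ℝ) :
    g h ≤ g 0 + g' 0 * h + L / 2 * h ^ 2 := by
  have hφ : ∀ t, HasDerivAt (fun t => g t - g' 0 * t - L / 2 * t ^ 2) (g' t - g' 0 - L * t) t :=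
    fun t => by
      refine (((hg t).fun_sub ((hasDerivAt_id' t).const_mul (g' 0))).fun_sub
        ((hasDerivAt_pow 2 t).const_mul (L / 2))).congr_deriv ?_
      norm_num; ring
  have hsign : ∀ t, (g' t - g' 0 - L * t) * t ≤ 0 := fun t => by
    have : (g' t - g' 0) * t ≤ L * t ^ 2 := by
      calc (g' t - g' 0) * t ≤ |g' t - g' 0| * |t| := by rw [← abs_mul]; exact le_abs_self _
        _ ≤ L * |t| * |t| := by gcongr; exact hlip t
        _ = L * t ^ 2 := by rw [mul_assoc, ← sq, sq_abs]
    linarith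
  have := le_of_hasDerivAt_mul_self_nonpos hφ hsign h
  norm_num at this
  linarith

theorem hasDerivAt_comp_add_smul_of_hasGradientAt {E : Type*} [NormedAddCommGroup E]
    [InnerProductSpace ℝ E] [CompleteSpace E] {f : E → ℝ} {f' : E → E}
    (hf : ∀ y, HasGradientAt f (f' y) y) (z v : E) (s : ℝ) :
    HasDerivAt (fun s : ℝ => f (z + s • v)) (inner ℝ (f' (z + s • v)) v) s := by
  have hline : HasDerivAt (fun s : ℝ => z + s • v) v s := by
    simpa using ((hasDerivAt_id s).smul_const v).const_add z
  exact (hf (z + s • v)).hasFDerivAt.comp_hasDerivAt s hline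

theorem ConvexOn.inner_gradient_le_sub {E : Type*} [NormedAddCommGroup E]
    [InnerProductSpace ℝ E] [CompleteSpace E] {f : E → ℝ} {f' : E → E}
    (hconv : ConvexOn ℝ univ f) (hf : ∀ y, HasGradientAt f (f' y) y) (z w : E) :
    inner ℝ (f' z) (w - z) ≤ f w - f z := by
  have hline : ConvexOn ℝ univ (fun s : ℝ => f (z + s • (w - z))) := by
    have h := hconv.comp_affineMap (AffineMap.lineMap (k := ℝ) z w)
    rw [preimage_univ] at h
    refine h.congr fun s _ => ?_
    simp [AffineMap.lineMap_apply_module', add_comm]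
  have := hline.le_slope_of_hasDerivAt (mem_univ 0) (mem_univ 1) one_pos
    (by simpa using hasDerivAt_comp_add_smul_of_hasGradientAt hf z (w - z) 0)
  simpa [slope_def_field] using this

/-- First-order optimality for a smooth plus convex objective: `-h'` is a subgradient of `φ` at a
minimizer `d` of `h + φ`. -/
theorem ConvexOn.sub_mul_le_of_forall_add_le {φ h : ℝ → ℝ} {h' d : ℝ}
    (hφ : ConvexOn ℝ univ φ) (hh : HasDerivAt h h' d) (hmin : ∀ t, h d + φ d ≤ h t + φ t)
    (t : ℝ) : φ d - h' * (t - d) ≤ φ t := by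
  have hslope : Tendsto (fun s => (h (d + s * (t - d)) - h d) / s) (𝓝[>] 0)
      (𝓝 (h' * (t - d))) := by
    have hline : HasDerivAt (fun s => h (d + s * (t - d))) (h' * (t - d)) 0 := by
      have := hh.comp_of_eq 0 (((hasDerivAt_id' 0).mul_const (t - d)).const_add d) (by simp)
      simp only [one_mul] at this
      exact this
    simpa [slope_fun_def_field] using
      (hasDerivAt_iff_tendsto_slope.1 hline).mono_left (nhdsGT_le_nhdsNE 0)
  have hchord : ∀ s ∈ Ioo (0 : ℝ) 1, φ d - φ t ≤ (h (d + s * (t - d)) - h d) / s := by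
    rintro s ⟨hs0, hs1⟩
    have hconv : φ (d + s * (t - d)) ≤ (1 - s) * φ d + s * φ t := by
      rw [show d + s * (t - d) = (1 - s) • d + s • t by simp only [smul_eq_mul]; ring]
      exact hφ.2 (mem_univ d) (mem_univ t) (sub_nonneg.2 hs1.le) hs0.le (sub_add_cancel 1 s)
    rw [le_div_iff₀ hs0]
    linarith [hmin (d + s * (t - d))]
  have := ge_of_tendsto hslope (by filter_upwards [Ioo_mem_nhdsGT one_pos] using hchord)
  linarith

theorem Antitone.tendsto_nat_mul_of_summable {a : ℕ → ℝ} (ha : Antitone a) (h0 : ∀ k, 0 ≤ a k)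
    (hs : Summable a) : Tendsto (fun k : ℕ => (k : ℝ) * a k) atTop (𝓝 0) := by
  have hS : Tendsto (fun k => ∑ j ∈ range k, a j) atTop (𝓝 (∑' j, a j)) :=
    hs.hasSum.tendsto_sum_nat
  have hhalf : Tendsto (fun k => ∑ j ∈ Ico (k / 2) k, a j) atTop (𝓝 0) := by
    have := hS.sub (hS.comp (Nat.tendsto_div_const_atTop two_ne_zero))
    rw [sub_self] at this
    refine this.congr fun k => ?_
    rw [sum_Ico_eq_sub _ (Nat.div_le_self k 2)]
    rfl
  -- `k * a k ≤ 2 ∑_{k/2 ≤ j < k} a j`, and these blocks of a convergent series tend to `0`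
  refine squeeze_zero (fun k => mul_nonneg k.cast_nonneg (h0 k)) (fun k => ?_)
    (by simpa using hhalf.const_mul 2)
  have hcard : (k : ℝ) ≤ 2 * ((k - k / 2 : ℕ) : ℝ) := by exact_mod_cast (by omega)
  have htail : ((k - k / 2 : ℕ) : ℝ) * a k ≤ ∑ j ∈ Ico (k / 2) k, a j := by
    simpa using card_nsmul_le_sum (Ico (k / 2) k) a (a k) fun j hj => ha (mem_Ico.1 hj).2.le
  nlinarith [h0 k]

theorem sum_mul_le_add_mul_sum {ι : Type*} [Fintype ι] {p a δ : ι → ℝ} {b pmin : ℝ}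
    (hpmin : 0 ≤ pmin) (hp : ∀ i, pmin ≤ p i) (hpsum : ∑ i, p i = 1) (ha : ∀ i, a i ≤ b + δ i)
    (hδ : ∀ i, δ i ≤ 0) : ∑ i, p i * a i ≤ b + pmin * ∑ i, δ i := by
  calc ∑ i, p i * a i ≤ ∑ i, (p i * b + pmin * δ i) := sum_le_sum fun i _ => by
        nlinarith [ha i, hδ i, hp i]
    _ = b + pmin * ∑ i, δ i := by rw [sum_add_distrib, ← sum_mul, hpsum, one_mul, mul_sum]

section Trajectory

variable {E : Type*} {n : ℕ}

/-- `E[g(x_k)]` when the coordinates are drawn i.i.d. with law `p`. -/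
def trajMean (p : Fin n → ℝ) (step : E → Fin n → E) (x0 : E) (g : E → ℝ) (k : ℕ) : ℝ :=
  ∑ ι : Fin k → Fin n, (∏ t, p (ι t)) * g (traj step x0 k ι)

variable {p : Fin n → ℝ} {step : E → Fin n → E} {x0 : E}

@[simp]
theorem trajMean_zero (g : E → ℝ) : trajMean p step x0 g 0 = g x0 := by
  simp [trajMean, traj]

theorem trajMean_succ (g : E → ℝ) (k : ℕ) :
    trajMean p step x0 g (k + 1) = trajMean p step x0 (fun z => ∑ i, p i * g (step z i)) k := by
  unfold trajMean
  rw [← (Fin.snocEquiv fun _ => Fin n).sum_comp, Fintype.sum_prod_type, Finset.sum_comm]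
  refine sum_congr rfl fun ι _ => ?_
  rw [mul_sum]
  refine sum_congr rfl fun i _ => ?_
  simp only [Fin.snocEquiv_apply, traj, Fin.prod_univ_castSucc, Fin.snoc_castSucc, Fin.snoc_last]
  ring

theorem trajMean_const (hpsum : ∑ i, p i = 1) (c : ℝ) (k : ℕ) :
    trajMean p step x0 (fun _ => c) k = c := by
  induction k with
  | zero => simp
  | succ k ih => rw [trajMean_succ, ← sum_mul, hpsum, one_mul, ih]

@[simp]
theorem trajMean_sub (g h : E → ℝ) (k : ℕ) :
    trajMean p step x0 (fun z => g z - h z) k =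
      trajMean p step x0 g k - trajMean p step x0 h k := by
  simp only [trajMean, mul_sub, sum_sub_distrib]

@[simp]
theorem trajMean_const_mul (c : ℝ) (g : E → ℝ) (k : ℕ) :
    trajMean p step x0 (fun z => c * g z) k = c * trajMean p step x0 g k := by
  simp only [trajMean, mul_sum, mul_left_comm]

theorem trajMean_mono (hp : ∀ i, 0 ≤ p i) {g h : E → ℝ} (hgh : ∀ z, g z ≤ h z) (k : ℕ) :
    trajMean p step x0 g k ≤ trajMean p step x0 h k :=
  sum_le_sum fun ι _ => mul_le_mul_of_nonneg_left (hgh _) (prod_nonneg fun t _ => hp (ι t))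

theorem trajMean_nonneg (hp : ∀ i, 0 ≤ p i) {g : E → ℝ} (hg : ∀ z, 0 ≤ g z) (k : ℕ) :
    0 ≤ trajMean p step x0 g k :=
  sum_nonneg fun ι _ => mul_nonneg (prod_nonneg fun t _ => hp (ι t)) (hg _)

theorem sum_trajMean_add_trajMean_le (hp : ∀ i, 0 ≤ p i) {U V : E → ℝ}
    (hV : ∀ z, ∑ i, p i * V (step z i) + U z ≤ V z) (k : ℕ) :
    ∑ j ∈ range k, trajMean p step x0 U j + trajMean p step x0 V k ≤ V x0 := by
  induction k with
  | zero => simp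
  | succ k ih =>
    have hstep : trajMean p step x0 V (k + 1) ≤
        trajMean p step x0 V k - trajMean p step x0 U k := by
      rw [trajMean_succ, ← trajMean_sub]
      exact trajMean_mono hp (fun z => by linarith [hV z]) k
    rw [sum_range_succ]
    linarith

theorem trajMean_le_of_lyapunov (hp : ∀ i, 0 ≤ p i) {U V : E → ℝ}
    (hU : ∀ z, 0 ≤ U z) (hV : ∀ z, ∑ i, p i * V (step z i) + U z ≤ V z) (k : ℕ) :
    trajMean p step x0 V k ≤ V x0 := by
  linarith [sum_trajMean_add_trajMean_le (x0 := x0) hp hV k,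
    sum_nonneg fun j (_ : j ∈ range k) => trajMean_nonneg (step := step) (x0 := x0) hp hU j]

theorem tendsto_mul_trajMean_sub_of_lyapunov (hp : ∀ i, 0 ≤ p i) (hpsum : ∑ i, p i = 1)
    {F V : E → ℝ} {Fstar c : ℝ} (hc : 0 < c) (hF : ∀ z, Fstar ≤ F z) (hV0 : ∀ z, 0 ≤ V z)
    (hdesc : ∀ z, ∑ i, p i * F (step z i) ≤ F z)
    (hV : ∀ z, ∑ i, p i * V (step z i) + c * (F z - Fstar) ≤ V z) :
    Tendsto (fun k : ℕ => (k : ℝ) * (trajMean p step x0 F k - Fstar)) atTop (𝓝 0) := by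
  have hgap : ∀ k, 0 ≤ trajMean p step x0 F k - Fstar := fun k => by
    simpa [trajMean_const hpsum] using trajMean_mono (step := step) (x0 := x0) hp hF k
  refine Antitone.tendsto_nat_mul_of_summable (antitone_nat_of_succ_le fun k => ?_) hgap
    (summable_of_sum_range_le (c := V x0 / c) hgap fun k => ?_)
  · rw [trajMean_succ]
    linarith [trajMean_mono (step := step) (x0 := x0) hp hdesc k]
  · have := sum_trajMean_add_trajMean_le (x0 := x0) hp hV k
    simp only [trajMean_const_mul, trajMean_sub, trajMean_const hpsum, ← mul_sum] at this
    rw [le_div_iff₀' hc]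
    linarith [trajMean_nonneg (step := step) (x0 := x0) hp hV0 k]

end Trajectory

section CoordinateDescent

variable {ι : Type*}

noncomputable def modelDecrease (f' : EuclideanSpace ℝ ι → EuclideanSpace ℝ ι) (L : ι → ℝ)
    (ψ : ι → ℝ → ℝ) (z : EuclideanSpace ℝ ι) (i : ι) (d : ℝ) : ℝ :=
  f' z i * d + L i / 2 * d ^ 2 + ψ i (z i + d) - ψ i (z i)

variable {f F : EuclideanSpace ℝ ι → ℝ} {f' : EuclideanSpace ℝ ι → EuclideanSpace ℝ ι}
  {ψ : ι → ℝ → ℝ} {Lbar : ι → ℝ} {z : EuclideanSpace ℝ ι}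

@[simp]
theorem modelDecrease_zero (i : ι) : modelDecrease f' Lbar ψ z i 0 = 0 := by
  simp [modelDecrease]

theorem modelDecrease_add_sq_sub_sq_le {i : ι} (hψ : ConvexOn ℝ univ (ψ i)) {d : ℝ}
    (hd : ∀ t, modelDecrease f' Lbar ψ z i d ≤ modelDecrease f' Lbar ψ z i t) (x : ℝ) :
    modelDecrease f' Lbar ψ z i d + Lbar i / 2 * ((z i + d - x) ^ 2 - (z i - x) ^ 2) ≤
      f' z i * (x - z i) + ψ i x - ψ i (z i) := by
  have hφ : ConvexOn ℝ univ (fun t => ψ i (z i + t)) := by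
    have := hψ.translate_right (z i)
    rw [preimage_univ] at this
    exact this
  have hh : HasDerivAt (fun t => f' z i * t + Lbar i / 2 * t ^ 2) (f' z i + Lbar i * d) d := by
    refine (((hasDerivAt_id' d).const_mul (f' z i)).fun_add
      ((hasDerivAt_pow 2 d).const_mul (Lbar i / 2))).congr_deriv ?_
    norm_num; ring
  have := hφ.sub_mul_le_of_forall_add_le hh
    (fun t => by have := hd t; simp only [modelDecrease] at this; linarith) (x - z i)
  rw [add_sub_cancel] at this
  simp only [modelDecrease]
  linear_combination this

variable [Fintype ι] {p : ι → ℝ}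

noncomputable def coordLyapunov (Lbar p : ι → ℝ) (c : ℝ) (F : EuclideanSpace ℝ ι → ℝ)
    (xbar y : EuclideanSpace ℝ ι) : ℝ :=
  ∑ j, Lbar j / p j * (y j - xbar j) ^ 2 + c * (F y - F xbar)

theorem sum_sq_le_coordLyapunov {c : ℝ} (hc : 0 ≤ c) {xbar : EuclideanSpace ℝ ι}
    (hxbar : ∀ y, F xbar ≤ F y) (y : EuclideanSpace ℝ ι) :
    ∑ j, Lbar j / p j * (y j - xbar j) ^ 2 ≤ coordLyapunov Lbar p c F xbar y :=
  le_add_of_nonneg_right (mul_nonneg hc (sub_nonneg.2 (hxbar y)))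

theorem coordLyapunov_nonneg (hLbar : ∀ j, 0 ≤ Lbar j) (hp : ∀ j, 0 ≤ p j) {c : ℝ} (hc : 0 ≤ c)
    {xbar : EuclideanSpace ℝ ι} (hxbar : ∀ y, F xbar ≤ F y) (y : EuclideanSpace ℝ ι) :
    0 ≤ coordLyapunov Lbar p c F xbar y :=
  (sum_nonneg fun j _ => mul_nonneg (div_nonneg (hLbar j) (hp j)) (sq_nonneg _)).trans
    (sum_sq_le_coordLyapunov hc hxbar y)

variable [DecidableEq ι]

theorem sum_apply_add_smul_single (φ : ι → ℝ → ℝ) (z : EuclideanSpace ℝ ι) (i : ι) (d : ℝ) :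
    ∑ j, φ j ((z + d • EuclideanSpace.single i 1 : EuclideanSpace ℝ ι) j) =
      ∑ j, φ j (z j) + (φ i (z i + d) - φ i (z i)) := by
  rw [← sub_eq_iff_eq_add', ← sum_sub_distrib, Fintype.sum_eq_single i fun j hj => by simp [hj]]
  simp

theorem le_add_mul_add_sq_of_abs_grad_apply_sub_le {f : EuclideanSpace ℝ ι → ℝ}
    {f' : EuclideanSpace ℝ ι → EuclideanSpace ℝ ι} (hf : ∀ y, HasGradientAt f (f' y) y)
    {z : EuclideanSpace ℝ ι} {i : ι} {L : ℝ}
    (hlip : ∀ h : ℝ, |f' (z + h • EuclideanSpace.single i 1) i - f' z i| ≤ L * |h|) (d : ℝ) :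
    f (z + d • EuclideanSpace.single i 1) ≤ f z + f' z i * d + L / 2 * d ^ 2 := by
  have hg : ∀ s : ℝ, HasDerivAt (fun s => f (z + s • EuclideanSpace.single i 1))
      (f' (z + s • EuclideanSpace.single i 1) i) s := fun s => by
    simpa [EuclideanSpace.inner_single_right] using
      hasDerivAt_comp_add_smul_of_hasGradientAt hf z (EuclideanSpace.single i 1) s
  simpa using le_add_mul_add_sq_of_abs_deriv_sub_le hg (fun s => by simpa using hlip s) d

theorem le_add_modelDecrease (hF : ∀ y, F y = f y + ∑ i, ψ i (y i))
    (hf : ∀ y, HasGradientAt f (f' y) y) {i : ι} {L : ℝ}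
    (hlip : ∀ h : ℝ, |f' (z + h • EuclideanSpace.single i 1) i - f' z i| ≤ L * |h|)
    (hL : L ≤ Lbar i) (d : ℝ) :
    F (z + d • EuclideanSpace.single i 1) ≤ F z + modelDecrease f' Lbar ψ z i d := by
  have hquad : L / 2 * d ^ 2 ≤ Lbar i / 2 * d ^ 2 := by gcongr
  rw [hF, hF, sum_apply_add_smul_single, modelDecrease]
  linarith [le_add_mul_add_sq_of_abs_grad_apply_sub_le hf hlip d]

variable {pmin : ℝ}

theorem sum_mul_sum_sq_add_smul_single_le (hp : ∀ i, 0 < p i) (hpsum : ∑ i, p i = 1)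
    (hF : ∀ y, F y = f y + ∑ i, ψ i (y i)) (hconv : ConvexOn ℝ univ f)
    (hf : ∀ y, HasGradientAt f (f' y) y) (hψ : ∀ i, ConvexOn ℝ univ (ψ i)) {d : ι → ℝ}
    (hd : ∀ i t, modelDecrease f' Lbar ψ z i (d i) ≤ modelDecrease f' Lbar ψ z i t)
    (xbar : EuclideanSpace ℝ ι) :
    ∑ i, p i * ∑ j, Lbar j / p j *
        ((z + d i • EuclideanSpace.single i 1 : EuclideanSpace ℝ ι) j - xbar j) ^ 2 ≤
      ∑ j, Lbar j / p j * (z j - xbar j) ^ 2 + 2 * (F xbar - F z) -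
        2 * ∑ i, modelDecrease f' Lbar ψ z i (d i) := by
  have hgrad : ∑ i, f' z i * (xbar i - z i) ≤ f xbar - f z := by
    simpa [PiLp.inner_apply, mul_comm] using hconv.inner_gradient_le_sub hf z xbar
  have hstep : ∀ i, p i * ∑ j, Lbar j / p j *
      ((z + d i • EuclideanSpace.single i 1 : EuclideanSpace ℝ ι) j - xbar j) ^ 2 =
      p i * ∑ j, Lbar j / p j * (z j - xbar j) ^ 2 +
        Lbar i * ((z i + d i - xbar i) ^ 2 - (z i - xbar i) ^ 2) := fun i => by
    rw [sum_apply_add_smul_single (fun j t => Lbar j / p j * (t - xbar j) ^ 2)]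
    field_simp [(hp i).ne']
  have hprox := fun i => modelDecrease_add_sq_sub_sq_le (hψ i) (hd i) (xbar i)
  calc _ = ∑ j, Lbar j / p j * (z j - xbar j) ^ 2 +
        ∑ i, Lbar i * ((z i + d i - xbar i) ^ 2 - (z i - xbar i) ^ 2) := by
        rw [sum_congr rfl fun i _ => hstep i, sum_add_distrib, ← sum_mul, hpsum, one_mul]
    _ ≤ ∑ j, Lbar j / p j * (z j - xbar j) ^ 2 + ∑ i, 2 * (f' z i * (xbar i - z i) +
        ψ i (xbar i) - ψ i (z i) - modelDecrease f' Lbar ψ z i (d i)) := by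
        gcongr ∑ j, Lbar j / p j * (z j - xbar j) ^ 2 + ?_
        exact sum_le_sum fun i _ => by linarith [hprox i]
    _ ≤ _ := by
        simp only [← mul_sum, sum_sub_distrib, sum_add_distrib]
        rw [hF, hF]
        linarith

theorem sum_mul_coordLyapunov_add_le (hpmin : 0 < pmin) (hp : ∀ i, pmin ≤ p i)
    (hpsum : ∑ i, p i = 1) (hF : ∀ y, F y = f y + ∑ i, ψ i (y i)) (hconv : ConvexOn ℝ univ f)
    (hf : ∀ y, HasGradientAt f (f' y) y) (hψ : ∀ i, ConvexOn ℝ univ (ψ i)) {d : ι → ℝ}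
    (hdesc : ∀ i, F (z + d i • EuclideanSpace.single i 1) ≤
      F z + modelDecrease f' Lbar ψ z i (d i))
    (hd : ∀ i t, modelDecrease f' Lbar ψ z i (d i) ≤ modelDecrease f' Lbar ψ z i t)
    (xbar : EuclideanSpace ℝ ι) :
    ∑ i, p i * coordLyapunov Lbar p (2 / pmin) F xbar (z + d i • EuclideanSpace.single i 1) +
        2 * (F z - F xbar) ≤ coordLyapunov Lbar p (2 / pmin) F xbar z := by
  have hdist := sum_mul_sum_sq_add_smul_single_le (fun i => hpmin.trans_le (hp i)) hpsum hF
    hconv hf hψ hd xbar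
  have hval := sum_mul_le_add_mul_sum hpmin.le hp hpsum hdesc
    fun i => (hd i 0).trans_eq (modelDecrease_zero i)
  have hval' : 2 / pmin * (∑ i, p i * F (z + d i • EuclideanSpace.single i 1) - F z) ≤
      2 * ∑ i, modelDecrease f' Lbar ψ z i (d i) := by
    calc _ ≤ 2 / pmin * (pmin * ∑ i, modelDecrease f' Lbar ψ z i (d i)) := by gcongr; linarith
      _ = _ := by field_simp
  simp only [coordLyapunov, mul_add, sum_add_distrib]
  simp only [mul_left_comm _ (2 / pmin), ← mul_sum, mul_sub, sum_sub_distrib, ← sum_mul, hpsum]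
  linarith

end CoordinateDescent

/-- **Theorem 6 of the paper.** Stochastic proximal coordinate
descent on `F = f + ψ` with separable convex `ψ` and i.i.d. coordinate sampling
satisfies `E[F(x_k)] − F* = o(1/k)`; moreover, for every minimizer `x̄` of `F`,
the sequence `E[∑ᵢ (L̄ᵢ/pᵢ)((x_k)ᵢ − x̄ᵢ)²]` is bounded. -/
theorem proximal_coordinate_descent_o_one_div_k
    {n : ℕ}
    (f : EuclideanSpace ℝ (Fin n) → ℝ)
    (f' : EuclideanSpace ℝ (Fin n) → EuclideanSpace ℝ (Fin n))
    (hconv : ConvexOn ℝ Set.univ f)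
    (hderiv : ∀ y, HasGradientAt f (f' y) y)
    (Li : Fin n → ℝ) (hLi : ∀ i, 0 < Li i)
    (hcoordlip : ∀ (y : EuclideanSpace ℝ (Fin n)) (i : Fin n) (h : ℝ),
      |f' (y + h • EuclideanSpace.single i 1) i - f' y i| ≤ Li i * |h|)
    (Lbar : Fin n → ℝ) (hLbar : ∀ i, Li i ≤ Lbar i)
    (ψ : Fin n → ℝ → ℝ) (hψconv : ∀ i, ConvexOn ℝ Set.univ (ψ i))
    (F : EuclideanSpace ℝ (Fin n) → ℝ) (hF : ∀ y, F y = f y + ∑ i, ψ i (y i))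
    (xstar : EuclideanSpace ℝ (Fin n)) (hxstar : ∀ y, F xstar ≤ F y)
    (p : Fin n → ℝ) (pmin : ℝ) (hpmin : 0 < pmin)
    (hp : ∀ i, pmin ≤ p i) (hpsum : ∑ i, p i = 1)
    (D : EuclideanSpace ℝ (Fin n) → Fin n → ℝ)
    (hD : ∀ z i, ∀ t : ℝ,
      f' z i * D z i + Lbar i / 2 * D z i ^ 2 + ψ i (z i + D z i) ≤
        f' z i * t + Lbar i / 2 * t ^ 2 + ψ i (z i + t))
    (x0 : EuclideanSpace ℝ (Fin n)) :
    Filter.Tendsto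
      (fun k : ℕ => (k : ℝ) *
        ((∑ ι : Fin k → Fin n, (∏ t, p (ι t)) *
            F (traj (fun z i => z + D z i • EuclideanSpace.single i 1)
                x0 k ι)) - F xstar))
      Filter.atTop (nhds 0) ∧
    ∀ xbar : EuclideanSpace ℝ (Fin n), (∀ y, F xbar ≤ F y) →
      ∃ C : ℝ, ∀ k : ℕ,
        (∑ ι : Fin k → Fin n, (∏ t, p (ι t)) *
          ∑ i, Lbar i / p i *
            ((traj (fun z i => z + D z i • EuclideanSpace.single i 1)
                x0 k ι) i - xbar i) ^ 2) ≤ C := by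
  have hp0 : ∀ i, 0 ≤ p i := fun i => hpmin.le.trans (hp i)
  have hmin : ∀ z i t, modelDecrease f' Lbar ψ z i (D z i) ≤ modelDecrease f' Lbar ψ z i t :=
    fun z i t => by simp only [modelDecrease]; linarith [hD z i t]
  have hdesc : ∀ z i, F (z + D z i • EuclideanSpace.single i 1) ≤
      F z + modelDecrease f' Lbar ψ z i (D z i) :=
    fun z i => le_add_modelDecrease hF hderiv (hcoordlip z i) (hLbar i) (D z i)
  have hFdesc : ∀ z, ∑ i, p i * F (z + D z i • EuclideanSpace.single i 1) ≤ F z := fun z => by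
    simpa using sum_mul_le_add_mul_sum le_rfl hp0 hpsum (hdesc z)
      fun i => (hmin z i 0).trans_eq (modelDecrease_zero i)
  have hlyap := fun xbar z =>
    sum_mul_coordLyapunov_add_le hpmin hp hpsum hF hconv hderiv hψconv (hdesc z) (hmin z) xbar
  have hc : 0 ≤ 2 / pmin := by positivity
  refine ⟨tendsto_mul_trajMean_sub_of_lyapunov hp0 hpsum two_pos hxstar
    (coordLyapunov_nonneg (fun j => (hLi j).le.trans (hLbar j)) hp0 hc hxstar) hFdesc
    (hlyap xstar), fun xbar hxbar => ⟨coordLyapunov Lbar p (2 / pmin) F xbar x0, fun k => ?_⟩⟩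
  exact (trajMean_mono hp0 (sum_sq_le_coordLyapunov hc hxbar) k).trans
    (trajMean_le_of_lyapunov hp0 (fun y => mul_nonneg zero_le_two (sub_nonneg.2 (hxbar y)))
      (hlyap xbar) k)
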